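/- Let K ⊂ ℝ be a Cantor set and let I be a bridge of K, i.e., I = B(u) for some endpoint u of a bounded gap of K. Then K ∩ I is a Cantor set and τ(K ∩ I) ≥ τ(K). -/

import Mathlib

open Set

/-- A Cantor set: non-empty, compact, perfect, totally disconnected subset of ℝ. -/
def IsCantorSet (K : Set ℝ) : Prop :=
  K.Nonempty ∧ IsCompact K ∧ Perfect K ∧ IsTotallyDisconnected K

/-- `(a, b)` is a bounded gap of `K`: a bounded connected component of the complement of the
(compact) set `K`, recorded by its endpoints. -/
def IsBoundedGap (K : Set ℝ) (a b : ℝ) : Prop :=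
  a < b ∧ a ∈ K ∧ b ∈ K ∧ Set.Ioo a b ∩ K = ∅

/-- The right endpoint of the bridge at `u`, where `u` is the right endpoint of a bounded gap
of length `ℓ`: the nearest point `a > u` which is either `sSup K` (left endpoint of the
unbounded right gap) or the left endpoint of a gap `(a, b)` with `ℓ ≤ b - a`. -/
noncomputable def rightBridgeEnd (K : Set ℝ) (u ℓ : ℝ) : ℝ :=
  sInf {a : ℝ | u < a ∧ (a = sSup K ∨ ∃ b, IsBoundedGap K a b ∧ ℓ ≤ b - a)}

/-- The left endpoint of the bridge at `u`, where `u` is the left endpoint of a bounded gap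
of length `ℓ`. -/
noncomputable def leftBridgeEnd (K : Set ℝ) (u ℓ : ℝ) : ℝ :=
  sSup {a : ℝ | a < u ∧ (a = sInf K ∨ ∃ b, IsBoundedGap K b a ∧ ℓ ≤ a - b)}

/-- The set of thickness values `|B(u)|/|G|` at endpoints `u` of bounded gaps `G` of `K`. -/
def thicknessValues (K : Set ℝ) : Set ℝ :=
  {r : ℝ | ∃ a b : ℝ, IsBoundedGap K a b ∧
      (r = (rightBridgeEnd K b (b - a) - b) / (b - a) ∨
       r = (a - leftBridgeEnd K a (b - a)) / (b - a))}

/-- The (Newhouse) thickness of `K`. -/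
noncomputable def thickness (K : Set ℝ) : ℝ := sInf (thicknessValues K)

/-! Write `ℓ = b - a` and `c = B(b)`. Candidates for `B(b)` are `ℓ`-separated, so `c` is itself a
candidate: `max K` or the left end of a gap of length at least `ℓ`. Then `K ∩ [b, c]` is `K` cut
by an open interval whose ends lie in gaps, so it is still perfect. A gap of `K ∩ [b, c]` is a
gap of `K` strictly inside `(b, c)` of length at most `ℓ` (a longer one would be a candidate
before `c`), so `c` and `b` bound its bridges in `K` as well: its bridges in `K ∩ [b, c]` and in
`K` coincide, and the thickness values of `K ∩ [b, c]` are thickness values of `K`. The left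
bridge is the right bridge of `-K`. -/

section Reflection

variable {G : Type*} [TopologicalSpace G] [InvolutiveNeg G] [ContinuousNeg G] {s : Set G}

lemma Preperfect.neg (h : Preperfect s) : Preperfect (-s) := fun x hx => by
  simpa [Filter.map_principal, image_neg_eq_neg] using
    (h (-x) hx).map continuous_neg.continuousAt neg_injective

lemma Perfect.neg (h : Perfect s) : Perfect (-s) := ⟨h.closed.neg, h.acc.neg⟩

lemma IsTotallyDisconnected.neg (h : IsTotallyDisconnected s) : IsTotallyDisconnected (-s) := by
  rw [← image_neg_eq_neg]
  exact (Homeomorph.neg G).isEmbedding.isTotallyDisconnected_image.2 h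

end Reflection

lemma IsCantorSet.neg {K : Set ℝ} (hK : IsCantorSet K) : IsCantorSet (-K) :=
  ⟨hK.1.neg, hK.2.1.neg, hK.2.2.1.neg, hK.2.2.2.neg⟩

lemma isCantorSet_neg {K : Set ℝ} : IsCantorSet (-K) ↔ IsCantorSet K :=
  ⟨fun h => neg_neg K ▸ h.neg, IsCantorSet.neg⟩

lemma isBoundedGap_neg {K : Set ℝ} {a b : ℝ} :
    IsBoundedGap (-K) a b ↔ IsBoundedGap K (-b) (-a) := by
  rw [IsBoundedGap, IsBoundedGap, ← neg_eq_empty, inter_neg, neg_Ioo, neg_neg, neg_lt_neg_iff,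
    mem_neg, mem_neg]
  tauto

def rightBridgeCandidates (K : Set ℝ) (u ℓ : ℝ) : Set ℝ :=
  {a : ℝ | u < a ∧ (a = sSup K ∨ ∃ b, IsBoundedGap K a b ∧ ℓ ≤ b - a)}

def leftBridgeCandidates (K : Set ℝ) (u ℓ : ℝ) : Set ℝ :=
  {a : ℝ | a < u ∧ (a = sInf K ∨ ∃ b, IsBoundedGap K b a ∧ ℓ ≤ a - b)}

lemma rightBridgeEnd_eq_sInf (K : Set ℝ) (u ℓ : ℝ) :
    rightBridgeEnd K u ℓ = sInf (rightBridgeCandidates K u ℓ) := rfl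

lemma leftBridgeEnd_eq_sSup (K : Set ℝ) (u ℓ : ℝ) :
    leftBridgeEnd K u ℓ = sSup (leftBridgeCandidates K u ℓ) := rfl

lemma rightBridgeCandidates_neg (K : Set ℝ) (u ℓ : ℝ) :
    rightBridgeCandidates (-K) u ℓ = -leftBridgeCandidates K (-u) ℓ := by
  ext x
  simp only [rightBridgeCandidates, leftBridgeCandidates, mem_neg, mem_ofPred_eq, Real.sSup_neg,
    isBoundedGap_neg, neg_lt_neg_iff, neg_eq_iff_eq_neg]
  refine and_congr_right fun _ => or_congr_right ⟨?_, ?_⟩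
  · rintro ⟨d, hd, hℓ⟩
    exact ⟨-d, hd, by linarith⟩
  · rintro ⟨d, hd, hℓ⟩
    exact ⟨-d, by rwa [neg_neg], by linarith⟩

lemma rightBridgeEnd_neg (K : Set ℝ) (u ℓ : ℝ) :
    rightBridgeEnd (-K) u ℓ = -leftBridgeEnd K (-u) ℓ := by
  rw [rightBridgeEnd_eq_sInf, rightBridgeCandidates_neg, Real.sInf_neg, leftBridgeEnd_eq_sSup]

lemma leftBridgeEnd_neg (K : Set ℝ) (u ℓ : ℝ) :
    leftBridgeEnd (-K) u ℓ = -rightBridgeEnd K (-u) ℓ := by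
  rw [← neg_neg K, rightBridgeEnd_neg, neg_neg, neg_neg, neg_neg]

lemma thicknessValues_neg (K : Set ℝ) : thicknessValues (-K) = thicknessValues K := by
  ext r
  simp only [thicknessValues, mem_ofPred_eq, isBoundedGap_neg, rightBridgeEnd_neg,
    leftBridgeEnd_neg]
  constructor
  · rintro ⟨a, b, hgap, hr⟩
    refine ⟨-b, -a, hgap, ?_⟩
    rw [neg_sub_neg]
    rcases hr with hr | hr
    · right; rw [hr]; ring
    · left; rw [hr]; ring
  · rintro ⟨a, b, hgap, hr⟩
    refine ⟨-b, -a, by rwa [neg_neg, neg_neg], ?_⟩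
    simpa only [neg_sub_neg, neg_neg, sub_neg_eq_add, neg_add_eq_sub] using hr.symm

lemma thickness_neg (K : Set ℝ) : thickness (-K) = thickness K := by
  rw [thickness, thickness, thicknessValues_neg]

namespace IsBoundedGap

variable {K : Set ℝ} {a b : ℝ}

lemma exists_mem_lt (h : IsBoundedGap K a b) (hK : Preperfect K) : ∃ y ∈ K, y < a := by
  obtain ⟨y, ⟨hyb, hyK⟩, hya⟩ := accPt_iff_nhds.1 (hK a h.2.1) (Iio b) (Iio_mem_nhds h.1)
  refine ⟨y, hyK, lt_of_le_of_ne (not_lt.1 fun hay => ?_) hya⟩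
  exact eq_empty_iff_forall_notMem.1 h.2.2.2 y ⟨⟨hay, hyb⟩, hyK⟩

lemma neg (h : IsBoundedGap K a b) : IsBoundedGap (-K) (-b) (-a) :=
  isBoundedGap_neg.2 (by rwa [neg_neg, neg_neg])

lemma exists_mem_gt (h : IsBoundedGap K a b) (hK : Preperfect K) : ∃ y ∈ K, b < y := by
  obtain ⟨y, hyK, hy⟩ := h.neg.exists_mem_lt hK.neg
  exact ⟨-y, hyK, lt_neg_of_lt_neg hy⟩

lemma of_inter_Icc {c d : ℝ} (h : IsBoundedGap (K ∩ Icc c d) a b) :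
    IsBoundedGap K a b ∧ c ≤ a ∧ b ≤ d := by
  obtain ⟨hab, ⟨haK, hca, -⟩, ⟨hbK, -, hbd⟩, hgap⟩ := h
  refine ⟨⟨hab, haK, hbK, eq_empty_of_forall_notMem fun x ⟨hx, hxK⟩ => ?_⟩, hca, hbd⟩
  exact eq_empty_iff_forall_notMem.1 hgap x ⟨hx, hxK, hca.trans hx.1.le, hx.2.le.trans hbd⟩

lemma inter_Icc {c d : ℝ} (h : IsBoundedGap K a b) (hca : c ≤ a) (hbd : b ≤ d) :
    IsBoundedGap (K ∩ Icc c d) a b :=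
  ⟨h.1, ⟨h.2.1, hca, h.1.le.trans hbd⟩, ⟨h.2.2.1, hca.trans h.1.le, hbd⟩,
    eq_empty_of_subset_empty fun _ hx => h.2.2.2 ▸ ⟨hx.1, hx.2.1⟩⟩

lemma lt_csSup (h : IsBoundedGap K a b) (hK : Preperfect K) (hbdd : BddAbove K) : b < sSup K := by
  obtain ⟨y, hyK, hby⟩ := h.exists_mem_gt hK
  exact hby.trans_le (le_csSup hbdd hyK)

lemma le_rightBridgeEnd (h : IsBoundedGap K a b) (hK : Preperfect K) (hbdd : BddAbove K)
    (ℓ : ℝ) : b ≤ rightBridgeEnd K b ℓ :=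
  le_csInf ⟨sSup K, h.lt_csSup hK hbdd, Or.inl rfl⟩ fun _ hx => hx.1.le

lemma leftBridgeEnd_le (h : IsBoundedGap K a b) (hK : Preperfect K) (hbdd : BddBelow K)
    (ℓ : ℝ) : leftBridgeEnd K a ℓ ≤ a := by
  have h' := h.neg.le_rightBridgeEnd hK.neg hbdd.neg ℓ
  rwa [rightBridgeEnd_neg, neg_neg, neg_le_neg_iff] at h'

end IsBoundedGap

lemma csInf_mem_of_forall_add_le {S : Set ℝ} {ℓ : ℝ} (hℓ : 0 < ℓ) (hne : S.Nonempty)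
    (hbdd : BddBelow S) (hsep : ∀ x ∈ S, ∀ y ∈ S, x < y → x + ℓ ≤ y) : sInf S ∈ S := by
  obtain ⟨x, hxS, hx⟩ := exists_lt_of_csInf_lt hne (lt_add_of_pos_right (sInf S) hℓ)
  have hmin : ∀ y ∈ S, x ≤ y := fun y hyS => not_lt.1 fun hyx => by
    linarith [hsep y hyS x hxS hyx, csInf_le hbdd hyS]
  exact ((csInf_le hbdd hxS).antisymm (le_csInf hne hmin)) ▸ hxS

lemma csInf_inter_Iic_of_mem {α : Type*} [ConditionallyCompleteLinearOrder α] {s : Set α} {c : α}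
    (hs : BddBelow s) (hc : c ∈ s) : sInf (s ∩ Iic c) = sInf s := by
  have hs' : BddBelow (s ∩ Iic c) := hs.mono inter_subset_left
  refine (le_csInf ⟨c, hc⟩ fun x hx => ?_).antisymm
    (csInf_le_csInf hs ⟨c, hc, le_rfl⟩ inter_subset_left)
  rcases le_total x c with hxc | hcx
  · exact csInf_le hs' ⟨hx, hxc⟩
  · exact (csInf_le hs' ⟨hc, le_rfl⟩).trans hcx

section BridgeCandidates

variable {K : Set ℝ} {u ℓ x : ℝ}

lemma mem_of_mem_rightBridgeCandidates (hK : IsCompact K) (hne : K.Nonempty)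
    (hx : x ∈ rightBridgeCandidates K u ℓ) : x ∈ K := by
  rcases hx.2 with rfl | ⟨d, hd, -⟩
  · exact hK.sSup_mem hne
  · exact hd.2.1

lemma exists_Ioo_inter_eq_empty_of_mem_rightBridgeCandidates (hK : BddAbove K)
    (hx : x ∈ rightBridgeCandidates K u ℓ) : ∃ d, x < d ∧ Ioo x d ∩ K = ∅ := by
  rcases hx.2 with rfl | ⟨d, hd, -⟩
  · refine ⟨sSup K + 1, by linarith, eq_empty_of_forall_notMem fun y hy => ?_⟩
    exact (le_csSup hK hy.2).not_gt hy.1.1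
  · exact ⟨d, hd.1, hd.2.2.2⟩

lemma add_le_of_mem_rightBridgeCandidates (hK : BddAbove K) {y : ℝ}
    (hx : x ∈ rightBridgeCandidates K u ℓ) (hyK : y ∈ K) (hxy : x < y) : x + ℓ ≤ y := by
  rcases hx.2 with rfl | ⟨d, hd, hℓ⟩
  · exact absurd (le_csSup hK hyK) hxy.not_ge
  · have hdy : d ≤ y := not_lt.1 fun hyd =>
      eq_empty_iff_forall_notMem.1 hd.2.2.2 y ⟨⟨hxy, hyd⟩, hyK⟩
    linarith

lemma rightBridgeEnd_mem_rightBridgeCandidates (hK : IsCompact K) (hne : K.Nonempty)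
    (hℓ : 0 < ℓ) (hu : u < sSup K) : rightBridgeEnd K u ℓ ∈ rightBridgeCandidates K u ℓ :=
  csInf_mem_of_forall_add_le hℓ ⟨sSup K, hu, Or.inl rfl⟩ ⟨u, fun _ hx => hx.1.le⟩
    fun _ hx _ hy hxy => add_le_of_mem_rightBridgeCandidates hK.bddAbove hx
      (mem_of_mem_rightBridgeCandidates hK hne hy) hxy

lemma rightBridgeCandidates_inter_Icc (hK : BddAbove K) {b c : ℝ} (hbu : b ≤ u) (hcK : c ∈ K)
    (hc : c ∈ rightBridgeCandidates K u ℓ) :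
    rightBridgeCandidates (K ∩ Icc b c) u ℓ = rightBridgeCandidates K u ℓ ∩ Iic c := by
  have hsup : sSup (K ∩ Icc b c) = c :=
    IsGreatest.csSup_eq ⟨⟨hcK, hbu.trans hc.1.le, le_rfl⟩, fun _ hy => hy.2.2⟩
  ext x
  constructor
  · rintro ⟨hux, hx | ⟨d, hd, hℓ⟩⟩
    · rw [hsup] at hx
      subst hx
      exact ⟨hc, self_mem_Iic⟩
    · obtain ⟨hdK, -, hdc⟩ := hd.of_inter_Icc
      exact ⟨⟨hux, Or.inr ⟨d, hdK, hℓ⟩⟩, (hd.1.trans_le hdc).le⟩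
  · rintro ⟨⟨hux, hx⟩, hxc⟩
    refine ⟨hux, ?_⟩
    rcases (show x ≤ c from hxc).eq_or_lt with rfl | hxc
    · exact Or.inl hsup.symm
    rcases hx with rfl | ⟨d, hd, hℓ⟩
    · exact absurd (le_csSup hK hcK) hxc.not_ge
    have hdc : d ≤ c := not_lt.1 fun hcd =>
      eq_empty_iff_forall_notMem.1 hd.2.2.2 c ⟨⟨hxc, hcd⟩, hcK⟩
    exact Or.inr ⟨d, hd.inter_Icc (hbu.trans hux.le) hdc, hℓ⟩

lemma rightBridgeEnd_inter_Icc (hK : BddAbove K) {b c : ℝ} (hbu : b ≤ u) (hcK : c ∈ K)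
    (hc : c ∈ rightBridgeCandidates K u ℓ) :
    rightBridgeEnd (K ∩ Icc b c) u ℓ = rightBridgeEnd K u ℓ := by
  rw [rightBridgeEnd_eq_sInf, rightBridgeEnd_eq_sInf, rightBridgeCandidates_inter_Icc hK hbu hcK hc,
    csInf_inter_Iic_of_mem ⟨u, fun _ hx => hx.1.le⟩ hc]

lemma leftBridgeEnd_inter_Icc (hK : BddBelow K) {b c : ℝ} (huc : u ≤ c) (hbK : b ∈ K)
    (hb : b ∈ leftBridgeCandidates K u ℓ) :
    leftBridgeEnd (K ∩ Icc b c) u ℓ = leftBridgeEnd K u ℓ := by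
  have hb' : -b ∈ rightBridgeCandidates (-K) (-u) ℓ := by
    rw [rightBridgeCandidates_neg, neg_neg]
    exact neg_mem_neg.2 hb
  have h := rightBridgeEnd_inter_Icc hK.neg (neg_le_neg huc) (neg_mem_neg.2 hbK) hb'
  rwa [← neg_Icc, ← inter_neg, rightBridgeEnd_neg, rightBridgeEnd_neg, neg_neg, neg_inj] at h

end BridgeCandidates

lemma IsCantorSet.bddBelow_thicknessValues {K : Set ℝ} (hK : IsCantorSet K) :
    BddBelow (thicknessValues K) := by
  refine ⟨0, ?_⟩
  rintro r ⟨a, b, h, rfl | rfl⟩ <;> refine div_nonneg (sub_nonneg.2 ?_) (sub_pos.2 h.1).le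
  · exact h.le_rightBridgeEnd hK.2.2.1.acc hK.2.1.bddAbove _
  · exact h.leftBridgeEnd_le hK.2.2.1.acc hK.2.1.bddBelow _

lemma IsTotallyDisconnected.exists_isBoundedGap {M : Set ℝ} (htd : IsTotallyDisconnected M)
    (hM : IsCompact M) {x y : ℝ} (hx : x ∈ M) (hy : y ∈ M) (hxy : x < y) :
    ∃ p q, IsBoundedGap M p q := by
  obtain ⟨z, hz, hzM⟩ : ∃ z ∈ Icc x y, z ∉ M := not_subset.1 fun hsub =>
    hxy.ne (htd _ hsub isPreconnected_Icc (left_mem_Icc.2 hxy.le) (right_mem_Icc.2 hxy.le))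
  have hlow : IsCompact (M ∩ Iic z) := hM.inter_right isClosed_Iic
  have hhigh : IsCompact (M ∩ Ici z) := hM.inter_right isClosed_Ici
  obtain ⟨hpM, hpz⟩ := hlow.sSup_mem ⟨x, hx, hz.1⟩
  obtain ⟨hqM, hzq⟩ := hhigh.sInf_mem ⟨y, hy, hz.2⟩
  have hpz : sSup (M ∩ Iic z) < z := lt_of_le_of_ne hpz fun h => hzM (h ▸ hpM)
  have hzq : z < sInf (M ∩ Ici z) := lt_of_le_of_ne hzq fun h => hzM (h ▸ hqM)
  refine ⟨_, _, hpz.trans hzq, hpM, hqM, eq_empty_of_forall_notMem fun w ⟨⟨hpw, hwq⟩, hwM⟩ => ?_⟩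
  rcases le_total w z with hwz | hzw
  · exact (le_csSup hlow.bddAbove ⟨hwM, hwz⟩).not_gt hpw
  · exact (csInf_le hhigh.bddBelow ⟨hwM, hzw⟩).not_gt hwq

lemma inter_Icc_eq_Ioo_inter {K : Set ℝ} {a b c d : ℝ} (hab : a < b) (hcd : c < d)
    (ha : Ioo a b ∩ K = ∅) (hd : Ioo c d ∩ K = ∅) : K ∩ Icc b c = Ioo a d ∩ K := by
  ext x
  constructor
  · rintro ⟨hxK, hbx, hxc⟩
    exact ⟨⟨hab.trans_le hbx, hxc.trans_lt hcd⟩, hxK⟩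
  · rintro ⟨⟨hax, hxd⟩, hxK⟩
    refine ⟨hxK, not_lt.1 fun hxb => ?_, not_lt.1 fun hcx => ?_⟩
    · exact eq_empty_iff_forall_notMem.1 ha x ⟨⟨hax, hxb⟩, hxK⟩
    · exact eq_empty_iff_forall_notMem.1 hd x ⟨⟨hcx, hxd⟩, hxK⟩

lemma IsCantorSet.inter_Icc {K : Set ℝ} (hK : IsCantorSet K) {a b c d : ℝ} (hab : a < b)
    (hcd : c < d) (ha : Ioo a b ∩ K = ∅) (hd : Ioo c d ∩ K = ∅) (hbK : b ∈ K) (hbc : b ≤ c) :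
    IsCantorSet (K ∩ Icc b c) := by
  obtain ⟨-, hcpt, hperf, htd⟩ := hK
  refine ⟨⟨b, hbK, le_rfl, hbc⟩, hcpt.inter_right isClosed_Icc,
    ⟨hperf.closed.inter isClosed_Icc, ?_⟩, fun t ht => htd t (ht.trans inter_subset_left)⟩
  rw [inter_Icc_eq_Ioo_inter hab hcd ha hd]
  exact hperf.acc.open_inter isOpen_Ioo

namespace IsBoundedGap

variable {K : Set ℝ} {a b : ℝ}

lemma thicknessValues_inter_Icc_rightBridgeEnd_subset (hgap : IsBoundedGap K a b)
    (hK : IsCompact K) (hne : K.Nonempty)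
    (hc : rightBridgeEnd K b (b - a) ∈ rightBridgeCandidates K b (b - a))
    (hperf : Preperfect (K ∩ Icc b (rightBridgeEnd K b (b - a)))) :
    thicknessValues (K ∩ Icc b (rightBridgeEnd K b (b - a))) ⊆ thicknessValues K := by
  set c := rightBridgeEnd K b (b - a)
  rintro r ⟨p, q, hpq, hr⟩
  obtain ⟨hpqK, -, -⟩ := hpq.of_inter_Icc
  have hbp : b < p := by
    obtain ⟨y, hy, hyp⟩ := hpq.exists_mem_lt hperf
    exact hy.2.1.trans_lt hyp
  have hqc : q < c := by
    obtain ⟨y, hy, hqy⟩ := hpq.exists_mem_gt hperf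
    exact hqy.trans_le hy.2.2
  have hlen : q - p ≤ b - a := not_lt.1 fun hlt =>
    (csInf_le ⟨b, fun _ hx => hx.1.le⟩ ⟨hbp, Or.inr ⟨q, hpqK, hlt.le⟩⟩ : c ≤ p).not_gt
      (hpq.1.trans hqc)
  have hc' : c ∈ rightBridgeCandidates K q (q - p) :=
    ⟨hqc, hc.2.imp_right fun ⟨d, hd, hℓ⟩ => ⟨d, hd, hlen.trans hℓ⟩⟩
  have hb' : b ∈ leftBridgeCandidates K p (q - p) := ⟨hbp, Or.inr ⟨a, hgap, hlen⟩⟩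
  refine ⟨p, q, hpqK, ?_⟩
  rwa [rightBridgeEnd_inter_Icc hK.bddAbove (hbp.trans hpq.1).le
    (mem_of_mem_rightBridgeCandidates hK hne hc) hc',
    leftBridgeEnd_inter_Icc hK.bddBelow (hpq.1.trans hqc).le hgap.2.2.1 hb'] at hr

theorem isCantorSet_inter_Icc_rightBridgeEnd (hgap : IsBoundedGap K a b) (hK : IsCantorSet K) :
    IsCantorSet (K ∩ Icc b (rightBridgeEnd K b (b - a))) ∧
      thickness K ≤ thickness (K ∩ Icc b (rightBridgeEnd K b (b - a))) := by
  have ⟨hne, hcpt, hperf, _⟩ := hK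
  have hc := rightBridgeEnd_mem_rightBridgeCandidates hcpt hne (sub_pos.2 hgap.1)
    (hgap.lt_csSup hperf.acc hcpt.bddAbove)
  have hcK := mem_of_mem_rightBridgeCandidates hcpt hne hc
  obtain ⟨d, hcd, hd⟩ := exists_Ioo_inter_eq_empty_of_mem_rightBridgeCandidates hcpt.bddAbove hc
  have hK' := hK.inter_Icc hgap.1 hcd hgap.2.2.2 hd hgap.2.2.1 hc.1.le
  obtain ⟨p, q, hpq⟩ := hK'.2.2.2.exists_isBoundedGap hK'.2.1 ⟨hgap.2.2.1, le_rfl, hc.1.le⟩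
    ⟨hcK, hc.1.le, le_rfl⟩ hc.1
  exact ⟨hK', csInf_le_csInf hK.bddBelow_thicknessValues ⟨_, p, q, hpq, Or.inl rfl⟩
    (hgap.thicknessValues_inter_Icc_rightBridgeEnd_subset hcpt hne hc hK'.2.2.1.acc)⟩

end IsBoundedGap

/-- **Observation.** If `I` is a bridge of a Cantor set `K`, i.e. `I = B(u)` for an endpoint
`u` of a bounded gap of `K` (the bridge `[b, B(b)]` at the right endpoint `b`, or `[B(a), a]`
at the left endpoint `a`, of a bounded gap `(a, b)`), then `K ∩ I` is a Cantor set and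
`τ(K ∩ I) ≥ τ(K)`. -/
theorem bridge_restriction_thickness (K : Set ℝ) (hK : IsCantorSet K)
    (a b : ℝ) (hgap : IsBoundedGap K a b) :
    (IsCantorSet (K ∩ Set.Icc b (rightBridgeEnd K b (b - a))) ∧
      thickness (K ∩ Set.Icc b (rightBridgeEnd K b (b - a))) ≥ thickness K) ∧
    (IsCantorSet (K ∩ Set.Icc (leftBridgeEnd K a (b - a)) a) ∧
      thickness (K ∩ Set.Icc (leftBridgeEnd K a (b - a)) a) ≥ thickness K) := by
  refine ⟨hgap.isCantorSet_inter_Icc_rightBridgeEnd hK, ?_⟩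
  have h := hgap.neg.isCantorSet_inter_Icc_rightBridgeEnd hK.neg
  rwa [neg_sub_neg, rightBridgeEnd_neg, neg_neg, ← neg_Icc, ← inter_neg, isCantorSet_neg,
    thickness_neg, thickness_neg] at h
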